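/- Suppose ω is irrational and φ : 𝕋¹ → ℝ is continuous with ∫ φ = 0 such that the cohomological equation ψ(θ+ω) − ψ(θ) = φ(θ) admits no continuous solution ψ. Then the linear fibered holomorphic dynamics F(θ,z) = (θ+ω, e^{φ(θ)} z) has the zero section as an indifferent invariant curve which is not stable (admits no bounded open invariant tube with simply connected fibers containing the zero section). -/

import Mathlib

/-!
If the tube `𝒰` existed, it would contain `𝕋¹ × {|z| < ε}` by compactness, and boundedness of
the fibres of `Fⁿ(𝒰) ⊆ 𝒰` bounds every Birkhoff sum `Sₙφ` from above by a constant `C`. Since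
`∫ Sₙφ = 0`, each `S_N φ` is nonnegative somewhere, and `Sₙφ = S_N φ - S_{N-n}φ ∘ Tⁿ` gives
`Sₙφ ≥ -C` there for all `n ≤ N`; by compactness a single point has `|Sₙφ| ≤ C` for all `n`.
Gottschalk–Hedlund then produces a continuous solution of the cohomological equation: the orbit
of `(θ₀, 0)` under the skew product `(θ, u) ↦ (θ + ω, u + φ θ)` is bounded, a minimal set `K` in
its closure projects onto `𝕋¹` by minimality of the irrational rotation, and `K` is the graph of
a continuous function because vertical translations commute with the skew product.
-/

open Metric Set MeasureTheory

instance : Fact ((0:ℝ) < 1) := ⟨one_pos⟩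

/-- The circle `𝕋¹ = ℝ/ℤ`. -/
abbrev Torus1 := AddCircle (1:ℝ)

open Function

theorem AddCircle.eq_univ_of_image_add_coe_eq {p a : ℝ} (ha : Irrational (a / p))
    {S : Set (AddCircle p)} (hS : IsClosed S) (hne : S.Nonempty)
    (hinv : (· + (a : AddCircle p)) '' S = S) : S = univ := by
  obtain ⟨θ, hθ⟩ := hne
  have horbit : ∀ n : ℤ, θ + n • (a : AddCircle p) ∈ S := by
    intro n
    induction n using Int.induction_on with
    | zero => simpa using hθ
    | succ n ih => simpa [add_zsmul, add_assoc] using hinv.subset (mem_image_of_mem _ ih)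
    | pred n ih =>
      obtain ⟨s, hs, hsθ : s + _ = _⟩ := hinv.symm.subset ih
      convert hs using 1
      rw [eq_sub_of_add_eq hsθ, sub_zsmul, one_zsmul]
      abel
  have hdense : DenseRange fun n : ℤ => θ + n • (a : AddCircle p) :=
    (add_left_surjective θ).denseRange.comp (denseRange_zsmul_coe_iff.mpr ha)
      (continuous_const_add θ)
  exact eq_univ_of_univ_subset <|
    hdense.closure_range ▸ closure_minimal (range_subset_iff.mpr horbit) hS

theorem exists_minimal_isClosed_mapsTo {X : Type*} [TopologicalSpace X] {Φ : X → X}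
    {A : Set X} (hA : IsCompact A) (hAcl : IsClosed A) (hne : A.Nonempty) (hinv : MapsTo Φ A A) :
    ∃ K ⊆ A, K.Nonempty ∧ IsClosed K ∧ MapsTo Φ K K ∧
      ∀ L ⊆ K, L.Nonempty → IsClosed L → MapsTo Φ L L → L = K := by
  set 𝒮 := {K | K ⊆ A ∧ K.Nonempty ∧ IsClosed K ∧ MapsTo Φ K K}
  have hchain : ∀ c ⊆ 𝒮, IsChain (· ⊆ ·) c → c.Nonempty → ∃ lb ∈ 𝒮, ∀ K ∈ c, lb ⊆ K := by
    rintro c hc hc_chain ⟨K₀, hK₀⟩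
    have : Nonempty c := ⟨⟨K₀, hK₀⟩⟩
    have hdir : Directed (· ⊇ ·) fun K : c => (K : Set X) := fun ⟨K, hK⟩ ⟨L, hL⟩ =>
      (hc_chain.total hK hL).elim (fun h => ⟨⟨K, hK⟩, subset_rfl, h⟩)
        (fun h => ⟨⟨L, hL⟩, h, subset_rfl⟩)
    have hne : (⋂₀ c).Nonempty := sInter_eq_iInter ▸
      IsCompact.nonempty_iInter_of_directed_nonempty_isCompact_isClosed _ hdir
        (fun K => (hc K.2).2.1) (fun K => hA.of_isClosed_subset (hc K.2).2.2.1 (hc K.2).1)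
        (fun K => (hc K.2).2.2.1)
    exact ⟨⋂₀ c, ⟨(sInter_subset_of_mem hK₀).trans (hc hK₀).1, hne,
      isClosed_sInter fun K hK => (hc hK).2.2.1,
      fun x hx => mem_sInter.mpr fun K hK => (hc hK).2.2.2 (hx K hK)⟩,
      fun K hK => sInter_subset_of_mem hK⟩
  obtain ⟨K, -, ⟨hKA, hKne, hKcl, hKinv⟩, hKmin⟩ :=
    zorn_superset_nonempty 𝒮 hchain A ⟨subset_rfl, hne, hAcl, hinv⟩
  exact ⟨K, hKA, hKne, hKcl, hKinv, fun L hLK hLne hLcl hLinv =>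
    hLK.antisymm (hKmin ⟨hLK.trans hKA, hLne, hLcl, hLinv⟩ hLK)⟩

theorem IsCompact.exists_continuous_forall_mem {X Y : Type*} [TopologicalSpace X] [T2Space X]
    [TopologicalSpace Y] {K : Set (X × Y)} (hK : IsCompact K) (hsurj : ∀ x, ∃ y, (x, y) ∈ K)
    (huniq : ∀ x y y', (x, y) ∈ K → (x, y') ∈ K → y = y') :
    ∃ f : X → Y, Continuous f ∧ ∀ x, (x, f x) ∈ K := by
  have : CompactSpace K := isCompact_iff_compactSpace.mp hK
  have hbij : Bijective fun p : K => (p : X × Y).1 := by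
    refine ⟨fun ⟨⟨x, y⟩, hp⟩ ⟨⟨x', y'⟩, hp'⟩ h => ?_, fun x => ?_⟩
    · obtain rfl : x = x' := h
      exact Subtype.ext (Prod.ext rfl (huniq x y y' hp hp'))
    · obtain ⟨y, hy⟩ := hsurj x
      exact ⟨⟨(x, y), hy⟩, rfl⟩
  let h : K ≃ₜ X := (continuous_fst.comp continuous_subtype_val).homeoOfEquivCompactToT2
    (f := Equiv.ofBijective _ hbij)
  refine ⟨fun x => (h.symm x : X × Y).2,
    continuous_snd.comp (continuous_subtype_val.comp h.symm.continuous), fun x => ?_⟩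
  have hx : (h.symm x : X × Y).1 = x := h.apply_symm_apply x
  have hpt : (h.symm x : X × Y) = (x, (h.symm x : X × Y).2) := Prod.ext hx rfl
  exact hpt ▸ (h.symm x).2

def skewProduct {X M : Type*} [Add M] (T : X → X) (φ : X → M) (p : X × M) : X × M :=
  (T p.1, p.2 + φ p.1)

theorem skewProduct_iterate {X M : Type*} [AddCommMonoid M] (T : X → X) (φ : X → M) (n : ℕ)
    (x : X) (u : M) :
    (skewProduct T φ)^[n] (x, u) = (T^[n] x, u + birkhoffSum T φ n x) := by
  induction n generalizing x u with
  | zero => simp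
  | succ n ih => rw [iterate_succ_apply, skewProduct, ih, birkhoffSum_succ', add_assoc]; rfl

theorem continuous_skewProduct {X M : Type*} [TopologicalSpace X] [TopologicalSpace M] [Add M]
    [ContinuousAdd M] {T : X → X} {φ : X → M} (hT : Continuous T) (hφ : Continuous φ) :
    Continuous (skewProduct T φ) := by
  unfold skewProduct; fun_prop

section GottschalkHedlund

variable {X : Type*} [TopologicalSpace X] {T : X → X} {φ : X → ℝ} {K : Set (X × ℝ)}

theorem add_snd_mem_of_minimal_skewProduct (hKcl : IsClosed K)
    (hKinv : MapsTo (skewProduct T φ) K K)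
    (hKmin : ∀ L ⊆ K, L.Nonempty → IsClosed L → MapsTo (skewProduct T φ) L L → L = K)
    {x : X} {s t : ℝ} (hs : (x, s) ∈ K) (ht : (x, t) ∈ K) {p : X × ℝ} (hp : p ∈ K) :
    (p.1, p.2 + (t - s)) ∈ K := by
  -- `K ∩ τ⁻¹ K` is a closed invariant set containing `(x, s)`: `τ` commutes with `skewProduct`.
  set τ : X × ℝ → X × ℝ := fun q => (q.1, q.2 + (t - s))
  have hL : K ∩ τ ⁻¹' K = K := by
    refine hKmin _ inter_subset_left ⟨(x, s), hs, by simpa [τ] using ht⟩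
      (hKcl.inter (hKcl.preimage (by fun_prop))) fun q ⟨hqK, hqτ⟩ => ⟨hKinv hqK, ?_⟩
    simpa only [τ, skewProduct, mem_preimage, add_right_comm] using hKinv hqτ
  exact (hL.symm ▸ hp : p ∈ K ∩ τ ⁻¹' K).2

theorem snd_eq_of_minimal_skewProduct (hKcl : IsClosed K)
    (hKbdd : Bornology.IsBounded (Prod.snd '' K)) (hKinv : MapsTo (skewProduct T φ) K K)
    (hKmin : ∀ L ⊆ K, L.Nonempty → IsClosed L → MapsTo (skewProduct T φ) L L → L = K)
    {x : X} {s t : ℝ} (hs : (x, s) ∈ K) (ht : (x, t) ∈ K) : s = t := by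
  by_contra hne
  have hc : 0 < |t - s| := abs_pos.mpr (sub_ne_zero.mpr (Ne.symm hne))
  have hiter : ∀ n : ℕ, (x, s + n * (t - s)) ∈ K := by
    intro n
    induction n with
    | zero => simpa using hs
    | succ n ih =>
      simpa [add_mul, add_assoc] using
        add_snd_mem_of_minimal_skewProduct hKcl hKinv hKmin hs ht ih
  obtain ⟨C, hC⟩ := isBounded_iff_forall_norm_le.mp hKbdd
  obtain ⟨n, hn⟩ := exists_nat_gt ((C + |s|) / |t - s|)
  have hbound : |s + n * (t - s)| ≤ C := hC _ (mem_image_of_mem Prod.snd (hiter n))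
  have : (n : ℝ) * |t - s| ≤ C + |s| :=
    calc (n : ℝ) * |t - s| = |s + n * (t - s) - s| := by
          rw [add_sub_cancel_left, abs_mul, Nat.abs_cast]
      _ ≤ |s + n * (t - s)| + |s| := abs_sub _ _
      _ ≤ C + |s| := by linarith
  rw [div_lt_iff₀ hc] at hn
  linarith

theorem image_fst_eq_univ_of_minimal_skewProduct [T2Space X] (hT : Continuous T)
    (hmin : ∀ S : Set X, IsClosed S → S.Nonempty → T '' S = S → S = univ) (hφ : Continuous φ)
    (hK : IsCompact K) (hKne : K.Nonempty) (hKinv : MapsTo (skewProduct T φ) K K)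
    (hKmin : ∀ L ⊆ K, L.Nonempty → IsClosed L → MapsTo (skewProduct T φ) L L → L = K) :
    Prod.fst '' K = univ := by
  have hΦK : skewProduct T φ '' K = K :=
    hKmin _ (image_subset_iff.mpr hKinv) (hKne.image _)
      (hK.image (continuous_skewProduct hT hφ)).isClosed
      ((mapsTo_image _ K).mono_left (image_subset_iff.mpr hKinv))
  refine hmin _ (hK.image continuous_fst).isClosed (hKne.image _) ?_
  conv_rhs => rw [← hΦK]
  simp only [image_image]
  rfl

theorem exists_continuous_coboundary_of_bounded_birkhoffSum [CompactSpace X] [T2Space X]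
    (hT : Continuous T) (hmin : ∀ S : Set X, IsClosed S → S.Nonempty → T '' S = S → S = univ)
    (hφ : Continuous φ) {x₀ : X} {C : ℝ} (hbd : ∀ n, |birkhoffSum T φ n x₀| ≤ C) :
    ∃ ψ : X → ℝ, Continuous ψ ∧ ∀ x, ψ (T x) - ψ x = φ x := by
  set Φ := skewProduct T φ
  set A := closure (range fun n => Φ^[n] (x₀, 0))
  have hA : A ⊆ univ ×ˢ Icc (-C) C := by
    refine closure_minimal ?_ (isClosed_univ.prod isClosed_Icc)
    rintro _ ⟨n, rfl⟩
    simpa [Φ, skewProduct_iterate, abs_le] using hbd n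
  have hAc : IsCompact A :=
    (isCompact_univ.prod isCompact_Icc).of_isClosed_subset isClosed_closure hA
  have hAinv : MapsTo Φ A A := by
    refine MapsTo.closure ?_ (continuous_skewProduct hT hφ)
    rintro _ ⟨n, rfl⟩
    exact ⟨n + 1, iterate_succ_apply' _ _ _⟩
  obtain ⟨K, hKA, hKne, hKcl, hKinv, hKmin⟩ :=
    exists_minimal_isClosed_mapsTo hAc isClosed_closure ⟨_, subset_closure ⟨0, rfl⟩⟩ hAinv
  have hKc : IsCompact K := hAc.of_isClosed_subset hKcl hKA
  have huniq : ∀ x s t, (x, s) ∈ K → (x, t) ∈ K → s = t := fun _ _ _ =>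
    snd_eq_of_minimal_skewProduct hKcl (hKc.image continuous_snd).isBounded hKinv hKmin
  have hproj : ∀ x, ∃ u, (x, u) ∈ K := by
    intro x
    obtain ⟨⟨_, u⟩, hu, rfl⟩ :=
      (image_fst_eq_univ_of_minimal_skewProduct hT hmin hφ hKc hKne hKinv hKmin).symm ▸
        mem_univ x
    exact ⟨u, hu⟩
  obtain ⟨ψ, hψ, hψK⟩ := hKc.exists_continuous_forall_mem hproj huniq
  refine ⟨ψ, hψ, fun x => ?_⟩
  rw [huniq _ _ _ (hψK (T x)) (hKinv (hψK x))]
  ring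

end GottschalkHedlund

theorem continuous_birkhoffSum {X M : Type*} [TopologicalSpace X] [TopologicalSpace M]
    [AddCommMonoid M] [ContinuousAdd M] {T : X → X} {φ : X → M} (hT : Continuous T)
    (hφ : Continuous φ) (n : ℕ) : Continuous (birkhoffSum T φ n) :=
  continuous_finsetSum _ fun k _ => hφ.comp (hT.iterate k)

section Integral

variable {X E : Type*} [MeasurableSpace X] {μ : Measure X} {T : X → X}
  [NormedAddCommGroup E] {φ : X → E}

theorem integrable_birkhoffSum (hT : MeasurePreserving T μ μ) (hφ : Integrable φ μ) (n : ℕ) :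
    Integrable (birkhoffSum T φ n) μ :=
  integrable_finsetSum _ fun k _ => (hT.iterate k).integrable_comp_of_integrable hφ

theorem integral_birkhoffSum [NormedSpace ℝ E] (hT : MeasurePreserving T μ μ)
    (hφ : Integrable φ μ) (n : ℕ) :
    ∫ x, birkhoffSum T φ n x ∂μ = n • ∫ x, φ x ∂μ := by
  have hk : ∀ k, ∫ x, φ (T^[k] x) ∂μ = ∫ x, φ x ∂μ := fun k => by
    rw [← integral_map (hT.iterate k).measurable.aemeasurable
      (by rw [(hT.iterate k).map_eq]; exact hφ.aestronglyMeasurable), (hT.iterate k).map_eq]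
  simp only [birkhoffSum]
  rw [integral_finsetSum]
  · simp [hk]
  · exact fun k _ => (hT.iterate k).integrable_comp_of_integrable hφ

end Integral

theorem exists_nonneg_birkhoffSum {X : Type*} [MeasurableSpace X] {μ : Measure X} [NeZero μ]
    {T : X → X} (hT : MeasurePreserving T μ μ) {φ : X → ℝ} (hφ : Integrable φ μ)
    (hmean : ∫ x, φ x ∂μ = 0) (n : ℕ) : ∃ x, 0 ≤ birkhoffSum T φ n x := by
  by_contra! hneg
  have hpos : 0 < ∫ x, -birkhoffSum T φ n x ∂μ := by
    refine (integral_pos_iff_support_of_nonneg (fun x => (neg_pos.mpr (hneg x)).le)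
      (integrable_birkhoffSum hT hφ n).neg).mpr ?_
    rw [eq_univ_of_forall fun x => mem_support.mpr (neg_pos.mpr (hneg x)).ne']
    exact Measure.measure_univ_pos.mpr (NeZero.ne μ)
  rw [integral_neg, integral_birkhoffSum hT hφ, hmean, smul_zero, neg_zero] at hpos
  exact hpos.false

theorem exists_forall_abs_birkhoffSum_le {X : Type*} [TopologicalSpace X] [CompactSpace X]
    {T : X → X} (hT : Continuous T) {φ : X → ℝ} (hφ : Continuous φ) {C : ℝ}
    (hub : ∀ n x, birkhoffSum T φ n x ≤ C) (hnonneg : ∀ n, ∃ x, 0 ≤ birkhoffSum T φ n x) :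
    ∃ x₀, ∀ n, |birkhoffSum T φ n x₀| ≤ C := by
  set E : ℕ → Set X := fun N => ⋂ n ∈ Iic N, {x | -C ≤ birkhoffSum T φ n x}
  have hE : ∀ N, IsClosed (E N) := fun N =>
    isClosed_biInter fun n _ => isClosed_le continuous_const (continuous_birkhoffSum hT hφ n)
  have hEne : ∀ N, (E N).Nonempty := by
    intro N
    obtain ⟨x, hx⟩ := hnonneg N
    refine ⟨x, mem_iInter₂.mpr fun n (hn : n ≤ N) => show -C ≤ _ from ?_⟩
    have hsplit := birkhoffSum_add T φ n (N - n) x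
    rw [Nat.add_sub_cancel' hn] at hsplit
    linarith [hub (N - n) (T^[n] x)]
  obtain ⟨x₀, hx₀⟩ := IsCompact.nonempty_iInter_of_sequence_nonempty_isCompact_isClosed E
    (fun N => biInter_subset_biInter_left (Iic_subset_Iic.mpr N.le_succ)) hEne
    (hE 0).isCompact hE
  exact ⟨x₀, fun n =>
    abs_le.mpr ⟨mem_iInter₂.mp (mem_iInter.mp hx₀ n) n self_mem_Iic, hub n x₀⟩⟩

theorem exists_pos_forall_norm_lt_mem {X E : Type*} [TopologicalSpace X] [CompactSpace X]
    [SeminormedAddCommGroup E] {U : Set (X × E)} (hU : IsOpen U) (h0 : ∀ x, (x, 0) ∈ U) :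
    ∃ ε > 0, ∀ x z, ‖z‖ < ε → (x, z) ∈ U := by
  obtain ⟨u, v, -, hv, hu, h0v, huv⟩ := generalized_tube_lemma isCompact_univ isCompact_singleton
    hU (by rintro ⟨x, z⟩ ⟨-, rfl⟩; exact h0 x)
  obtain ⟨ε, hε, hball⟩ := Metric.isOpen_iff.mp hv 0 (h0v rfl)
  exact ⟨ε, hε, fun x z hz => huv ⟨hu (mem_univ x), hball (mem_ball_zero_iff.mpr hz)⟩⟩

theorem birkhoffSum_le_log_div_of_invariant {X : Type*} {T : X → X} {φ : X → ℝ}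
    {U : Set (X × ℂ)} (hU : ∀ p ∈ U, (T p.1, (Real.exp (φ p.1) : ℂ) * p.2) ∈ U) {M r : ℝ}
    (hM : ∀ p ∈ U, ‖p.2‖ ≤ M) (hr : 0 < r) (hrU : ∀ x, (x, (r : ℂ)) ∈ U) (n : ℕ) (x : X) :
    birkhoffSum T φ n x ≤ Real.log (M / r) := by
  have hiter : ∀ n x z, (x, z) ∈ U →
      (T^[n] x, (Real.exp (birkhoffSum T φ n x) : ℂ) * z) ∈ U := by
    intro n
    induction n with
    | zero => intro x z h; simpa using h
    | succ n ih =>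
      intro x z h
      convert ih _ _ (hU _ h) using 2
      · exact iterate_succ_apply T n x
      rw [birkhoffSum_succ', Real.exp_add]
      push_cast
      ring
  have hbound : Real.exp (birkhoffSum T φ n x) * r ≤ M := by
    simpa [abs_of_pos hr] using hM _ (hiter n x _ (hrU x))
  rw [Real.le_log_iff_exp_le (div_pos ((mul_pos (Real.exp_pos _) hr).trans_le hbound) hr),
    le_div_iff₀ hr]
  exact hbound

/-- **Furstenberg-type example: an indifferent but unstable invariant curve.**
If `ω` is irrational and `φ : 𝕋¹ → ℝ` is continuous with zero mean such that the
cohomological equation `ψ(θ+ω) − ψ(θ) = φ(θ)` has no continuous solution, then the linear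
fibered dynamics `F(θ,z) = (θ+ω, e^{φ(θ)} z)` has the zero section as an indifferent
invariant curve which is not stable: there is no bounded open invariant tube with simply
connected fibers containing the zero section. -/
theorem furstenberg_example_not_stable (ω : ℝ) (hω : Irrational ω)
    (φ : Torus1 → ℝ) (hφ : Continuous φ)
    (hmean : (∫ θ : Torus1, φ θ) = 0)
    (hnosol : ¬ ∃ ψ : Torus1 → ℝ, Continuous ψ ∧
      ∀ θ : Torus1, ψ (θ + (ω : Torus1)) - ψ θ = φ θ) :
    ¬ ∃ 𝒰 : Set (Torus1 × ℂ), IsOpen 𝒰 ∧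
        Bornology.IsBounded (Prod.snd '' 𝒰) ∧
        (∀ θ : Torus1, (θ, (0:ℂ)) ∈ 𝒰) ∧
        (∀ p ∈ 𝒰, (p.1 + (ω : Torus1), (Real.exp (φ p.1) : ℂ) * p.2) ∈ 𝒰) ∧
        (∀ θ : Torus1, IsConnected {z : ℂ | (θ, z) ∈ 𝒰} ∧
          SimplyConnectedSpace {z : ℂ // (θ, z) ∈ 𝒰}) := by
  rintro ⟨𝒰, hopen, hbdd, hzero, hinv, -⟩
  have hT : Continuous (· + (ω : Torus1)) := continuous_add_const _
  obtain ⟨ε, hε, hε𝒰⟩ := exists_pos_forall_norm_lt_mem hopen hzero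
  obtain ⟨M, hM⟩ := isBounded_iff_forall_norm_le.mp hbdd
  have hub : ∀ n θ, birkhoffSum (· + (ω : Torus1)) φ n θ ≤ Real.log (M / (ε / 2)) :=
    birkhoffSum_le_log_div_of_invariant hinv (fun p hp => hM _ (mem_image_of_mem _ hp))
      (half_pos hε) fun θ => hε𝒰 θ _ (by simpa [abs_of_pos hε] using half_lt_self hε)
  obtain ⟨θ₀, hθ₀⟩ := exists_forall_abs_birkhoffSum_le hT hφ hub <|
    exists_nonneg_birkhoffSum (measurePreserving_add_right volume _)
      (hφ.integrable_of_hasCompactSupport (.of_compactSpace φ)) hmean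
  exact hnosol <| exists_continuous_coboundary_of_bounded_birkhoffSum hT
    (fun _ => AddCircle.eq_univ_of_image_add_coe_eq (by rwa [div_one])) hφ hθ₀
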